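/- arXiv:2411.05598 — 5 statements merged into one kernel-verified Lean document; each statement's English description precedes it below -/
import Mathlib

section
/- If A and B are matrices over the natural numbers that are strong shift equivalent with lag m (i.e., there exist natural-number matrices R_1,...,R_m and S_1,...,S_m with A = R_1 S_1, S_i R_i = R_{i+1} S_{i+1} for i = 1,...,m-1, and S_m R_m = B), then A and B are shift equivalent with lag m (i.e., there exist natural-number matrices R and S with A^m = RS, SR = B^m, AR = RB, and BS = SA). -/
/-- Strong shift equivalence of square matrices over `ℕ` with lag `m`:
the `m`-step transitive closure of the elementary shift relation
(`A = R·S`, `S·R = B`). -/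
inductive MatSSE :
    ∀ (V : Type) (_ : Fintype V) (_ : DecidableEq V)
      (W : Type) (_ : Fintype W) (_ : DecidableEq W),
      Matrix V V ℕ → Matrix W W ℕ → ℕ → Prop
  | elementary {V : Type} {fV : Fintype V} {dV : DecidableEq V}
      {W : Type} {fW : Fintype W} {dW : DecidableEq W}
      (A : Matrix V V ℕ) (B : Matrix W W ℕ)
      (R : Matrix V W ℕ) (S : Matrix W V ℕ)
      (hA : A = R * S) (hB : S * R = B) :
      MatSSE V fV dV W fW dW A B 1
  | step {V : Type} {fV : Fintype V} {dV : DecidableEq V}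
      {W : Type} {fW : Fintype W} {dW : DecidableEq W}
      {U : Type} {fU : Fintype U} {dU : DecidableEq U}
      {A : Matrix V V ℕ} {B : Matrix W W ℕ} {C : Matrix U U ℕ} {m : ℕ}
      (h₁ : MatSSE V fV dV W fW dW A B m)
      (h₂ : MatSSE W fW dW U fU dU B C 1) :
      MatSSE V fV dV U fU dU A C (m + 1)

/-- Shift equivalence of square `ℕ`-matrices with lag `m`. -/
def MatSE {V W : Type} [Fintype V] [Fintype W]
    [DecidableEq V] [DecidableEq W]
    (A : Matrix V V ℕ) (B : Matrix W W ℕ) (m : ℕ) : Prop :=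
  ∃ (R : Matrix V W ℕ) (S : Matrix W V ℕ),
    A ^ m = R * S ∧ S * R = B ^ m ∧ A * R = R * B ∧ B * S = S * A

/-- A matrix is essential if it has no zero rows and no zero columns. -/
def MatEssential {V : Type} (A : Matrix V V ℕ) : Prop :=
  (∀ v, ∃ w, A v w ≠ 0) ∧ (∀ w, ∃ v, A v w ≠ 0)

/-!
An elementary shift `A = R S`, `S R = B` is a shift equivalence of lag 1, and shift
equivalences compose: from `(R₁, S₁)` of lag `m` between `A, B` and `(R₂, S₂)` of lag `n`
between `B, C`, the pair `(R₁ R₂, S₂ S₁)` is one of lag `m + n` between `A, C`, because the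
intertwining relations `A R₁ = R₁ B` propagate to all powers, `Aᵏ R₁ = R₁ Bᵏ`.
-/

theorem Matrix.pow_mul_eq_mul_pow_of_mul_eq_mul {α V W : Type*} [Semiring α]
    [Fintype V] [DecidableEq V] [Fintype W] [DecidableEq W]
    {A : Matrix V V α} {B : Matrix W W α} {R : Matrix V W α} (h : A * R = R * B) (k : ℕ) :
    A ^ k * R = R * B ^ k := by
  induction k with
  | zero => simp
  | succ k ih =>
    rw [pow_succ', Matrix.mul_assoc, ih, ← Matrix.mul_assoc, h, Matrix.mul_assoc, ← pow_succ']

namespace MatSE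

variable {V W U : Type} [Fintype V] [DecidableEq V] [Fintype W] [DecidableEq W]
  [Fintype U] [DecidableEq U]

theorem of_eq_mul {A : Matrix V V ℕ} {B : Matrix W W ℕ} {R : Matrix V W ℕ} {S : Matrix W V ℕ}
    (hA : A = R * S) (hB : S * R = B) : MatSE A B 1 :=
  ⟨R, S, by rw [pow_one, hA], by rw [pow_one, hB],
    by rw [hA, ← hB, Matrix.mul_assoc], by rw [hA, ← hB, Matrix.mul_assoc]⟩

theorem trans {A : Matrix V V ℕ} {B : Matrix W W ℕ} {C : Matrix U U ℕ} {m n : ℕ}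
    (hAB : MatSE A B m) (hBC : MatSE B C n) : MatSE A C (m + n) := by
  obtain ⟨R₁, S₁, hA, hB, hAR₁, hBS₁⟩ := hAB
  obtain ⟨R₂, S₂, hB', hC, hBR₂, hCS₂⟩ := hBC
  refine ⟨R₁ * R₂, S₂ * S₁, ?_, ?_, ?_, ?_⟩
  · calc A ^ (m + n) = R₁ * (S₁ * A ^ n) := by rw [pow_add, hA, Matrix.mul_assoc]
      _ = R₁ * (B ^ n * S₁) := by rw [Matrix.pow_mul_eq_mul_pow_of_mul_eq_mul hBS₁]
      _ = R₁ * R₂ * (S₂ * S₁) := by rw [hB']; simp only [Matrix.mul_assoc]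
  · calc S₂ * S₁ * (R₁ * R₂) = S₂ * B ^ m * R₂ := by rw [← hB]; simp only [Matrix.mul_assoc]
      _ = C ^ m * (S₂ * R₂) := by
        rw [← Matrix.pow_mul_eq_mul_pow_of_mul_eq_mul hCS₂, Matrix.mul_assoc]
      _ = C ^ (m + n) := by rw [hC, pow_add]
  · rw [← Matrix.mul_assoc, hAR₁, Matrix.mul_assoc, hBR₂, Matrix.mul_assoc]
  · rw [← Matrix.mul_assoc, hCS₂, Matrix.mul_assoc, hBS₁, Matrix.mul_assoc]

end MatSE

/-- strong shift equivalence with lag `m` implies shift equivalence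
with lag `m`. -/
theorem stmt0 {V W : Type} [fV : Fintype V] [dV : DecidableEq V]
    [fW : Fintype W] [dW : DecidableEq W]
    (A : Matrix V V ℕ) (B : Matrix W W ℕ) (m : ℕ)
    (h : MatSSE V fV dV W fW dW A B m) :
    MatSE A B m := by
  induction h with
  | elementary A B R S hA hB => exact MatSE.of_eq_mul hA hB
  | step _ _ hAB hBC => exact hAB.trans hBC
end

section
/- Let A and B be essential square matrices over ℕ, and let (R, S, φ_R, φ_S, ψ_A, ψ_B) be a concrete shift between A and B with lag m. If the concrete shift is aligned, i.e., (ψ_A × id_A)(id_R × φ_S)(φ_R × id_S) = (id_A × ψ_A) and (ψ_B × id_B)(id_S × φ_R)(φ_S × id_R) = (id_B × ψ_B), then it is balanced, i.e., ψ_A^{-1} × ψ_A = (id_R × φ_S^{(m)})(φ_R^{(m)} × id_S) and ψ_B^{-1} × ψ_B = (id_S × φ_R^{(m)})(φ_S^{(m)} × id_R). -/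
/-! Edges of `ℕ`-matrices, fibered products of edge sets, paths, path isomorphisms,
concrete shifts, iterated path isomorphisms `φ^{(m)}`, and the aligned / balanced /
compatible conditions, following Carlsen–Dor-On–Eilers. -/

/-- The edge set `E_F = {(v, α, w) : 0 ≤ α < F_{v w}}` of a matrix `F` over `ℕ`. -/
def Edge {α β : Type} (F : Matrix α β ℕ) : Type :=
  {x : α × ℕ × β // x.2.1 < F x.1 x.2.2}

/-- Source of an edge. -/
def Edge.src {α β : Type} {F : Matrix α β ℕ} (e : Edge F) : α := e.1.1

/-- Range (target) of an edge. -/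
def Edge.tgt {α β : Type} {F : Matrix α β ℕ} (e : Edge F) : β := e.1.2.2

/-- Fibered product of two edge-like sets: composable pairs. -/
def FP {γ : Type} (X Y : Type) (t : X → γ) (s : Y → γ) : Type :=
  {p : X × Y // t p.1 = s p.2}

/-- Paths of length `m` in the graph of a square matrix `X`: composable `m`-tuples of edges. -/
def EPath {α : Type} (X : Matrix α α ℕ) (m : ℕ) : Type :=
  {p : Fin m → Edge X //
    ∀ (i : ℕ) (h : i + 1 < m), (p ⟨i + 1, h⟩).src = (p ⟨i, Nat.lt_of_succ_lt h⟩).tgt}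

/-- Source of a (nonempty) path. -/
def EPath.src {α : Type} {X : Matrix α α ℕ} {m : ℕ} (p : EPath X m) (h : 0 < m) : α :=
  ((p.1 ⟨0, h⟩)).src

/-- Range of a (nonempty) path. -/
def EPath.tgt {α : Type} {X : Matrix α α ℕ} {m : ℕ} (p : EPath X m) (h : 0 < m) : α :=
  ((p.1 ⟨m - 1, Nat.sub_lt h Nat.one_pos⟩)).tgt

/-- A concrete shift between `A` and `B` with lag `m`: matrices `R`, `S` over `ℕ` together
with path isomorphisms (source- and range-preserving bijections)
`φR : E_A × E_R → E_R × E_B`, `φS : E_B × E_S → E_S × E_A`,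
`ψA : E_R × E_S → E_A^m`, `ψB : E_S × E_R → E_B^m`. -/
structure ConcreteShift {V W : Type} (A : Matrix V V ℕ) (B : Matrix W W ℕ) (m : ℕ) where
  hm : 0 < m
  R : Matrix V W ℕ
  S : Matrix W V ℕ
  φR : FP (Edge A) (Edge R) Edge.tgt Edge.src ≃ FP (Edge R) (Edge B) Edge.tgt Edge.src
  φS : FP (Edge B) (Edge S) Edge.tgt Edge.src ≃ FP (Edge S) (Edge A) Edge.tgt Edge.src
  ψA : FP (Edge R) (Edge S) Edge.tgt Edge.src ≃ EPath A m
  ψB : FP (Edge S) (Edge R) Edge.tgt Edge.src ≃ EPath B m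
  φR_src : ∀ p, ((φR p).1.1).src = (p.1.1).src
  φR_tgt : ∀ p, ((φR p).1.2).tgt = (p.1.2).tgt
  φS_src : ∀ p, ((φS p).1.1).src = (p.1.1).src
  φS_tgt : ∀ p, ((φS p).1.2).tgt = (p.1.2).tgt
  ψA_src : ∀ p, (ψA p).src hm = (p.1.1).src
  ψA_tgt : ∀ p, (ψA p).tgt hm = (p.1.2).tgt
  ψB_src : ∀ p, (ψB p).src hm = (p.1.1).src
  ψB_tgt : ∀ p, (ψB p).tgt hm = (p.1.2).tgt

/-- The defining relation of the iterated path isomorphism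
`φ^{(m)} = (φ × id)(id × φ × id) ⋯ (id × φ) : E_X^m × E_M → E_M × E_Y^m`:
`IterRel φ m as r r' bs` holds iff `φ^{(m)}(as, r) = (r', bs)`, i.e. iff there is a chain
`ρ_m = r`, `ρ_0 = r'` with `φ(as_i, ρ_{i+1}) = (ρ_i, bs_i)` for all `i`. -/
def IterRel {α β : Type} {X : Matrix α α ℕ} {Y : Matrix β β ℕ} {M : Matrix α β ℕ}
    (φ : FP (Edge X) (Edge M) Edge.tgt Edge.src ≃ FP (Edge M) (Edge Y) Edge.tgt Edge.src)
    (m : ℕ) (as : EPath X m) (r r' : Edge M) (bs : EPath Y m) : Prop :=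
  ∃ ρ : Fin (m + 1) → Edge M, ρ (Fin.last m) = r ∧ ρ 0 = r' ∧
    ∀ i : Fin m, ∃ h : (as.1 i).tgt = (ρ i.succ).src,
      (φ ⟨(as.1 i, ρ i.succ), h⟩).1 = (ρ i.castSucc, bs.1 i)

variable {V W : Type} {A : Matrix V V ℕ} {B : Matrix W W ℕ} {m : ℕ}

/-- A concrete shift is aligned if
`(ψ_A × id_A)(id_R × φ_S)(φ_R × id_S) = (id_A × ψ_A)` and
`(ψ_B × id_B)(id_S × φ_R)(φ_S × id_R) = (id_B × ψ_B)`,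
under the canonical identifications `E_A^m × E_A ≅ E_A^{m+1} ≅ E_A × E_A^m`. -/
def ConcreteShift.Aligned (cs : ConcreteShift A B m) : Prop :=
  (∀ (a : Edge A) (r : Edge cs.R) (s : Edge cs.S)
      (h1 : a.tgt = r.src) (h2 : r.tgt = s.src)
      (r' : Edge cs.R) (b : Edge B) (_ : (cs.φR ⟨(a, r), h1⟩).1 = (r', b))
      (h3 : b.tgt = s.src)
      (s' : Edge cs.S) (a' : Edge A) (_ : (cs.φS ⟨(b, s), h3⟩).1 = (s', a'))
      (h4 : r'.tgt = s'.src),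
      (Fin.snoc (cs.ψA ⟨(r', s'), h4⟩).1 a' : Fin (m + 1) → Edge A) = (Fin.cons a (cs.ψA ⟨(r, s), h2⟩).1 : Fin (m + 1) → Edge A)) ∧
  (∀ (b : Edge B) (s : Edge cs.S) (r : Edge cs.R)
      (h1 : b.tgt = s.src) (h2 : s.tgt = r.src)
      (s' : Edge cs.S) (a' : Edge A) (_ : (cs.φS ⟨(b, s), h1⟩).1 = (s', a'))
      (h3 : a'.tgt = r.src)
      (r' : Edge cs.R) (b' : Edge B) (_ : (cs.φR ⟨(a', r), h3⟩).1 = (r', b'))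
      (h4 : s'.tgt = r'.src),
      (Fin.snoc (cs.ψB ⟨(s', r'), h4⟩).1 b' : Fin (m + 1) → Edge B) = (Fin.cons b (cs.ψB ⟨(s, r), h2⟩).1 : Fin (m + 1) → Edge B))

/-- A concrete shift is balanced if
`ψ_A⁻¹ × ψ_A = (id_R × φ_S^{(m)})(φ_R^{(m)} × id_S)` and
`ψ_B⁻¹ × ψ_B = (id_S × φ_R^{(m)})(φ_S^{(m)} × id_R)`. -/
def ConcreteShift.Balanced (cs : ConcreteShift A B m) : Prop :=
  (∀ (as : EPath A m) (r : Edge cs.R) (s : Edge cs.S)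
      (_ : as.tgt cs.hm = r.src) (h2 : r.tgt = s.src)
      (r₀ : Edge cs.R) (bs : EPath B m) (_ : IterRel cs.φR m as r r₀ bs)
      (s₀ : Edge cs.S) (as' : EPath A m) (_ : IterRel cs.φS m bs s s₀ as')
      (k : r₀.tgt = s₀.src),
      cs.ψA ⟨(r₀, s₀), k⟩ = as ∧ cs.ψA ⟨(r, s), h2⟩ = as') ∧
  (∀ (bs : EPath B m) (s : Edge cs.S) (r : Edge cs.R)
      (_ : bs.tgt cs.hm = s.src) (h2 : s.tgt = r.src)
      (s₀ : Edge cs.S) (as : EPath A m) (_ : IterRel cs.φS m bs s s₀ as)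
      (r₀ : Edge cs.R) (bs' : EPath B m) (_ : IterRel cs.φR m as r r₀ bs')
      (k : s₀.tgt = r₀.src),
      cs.ψB ⟨(s₀, r₀), k⟩ = bs ∧ cs.ψB ⟨(s, r), h2⟩ = bs')

/-- A concrete shift is compatible if
`φ_R^{(m)} = (id_R × ψ_B)(ψ_A⁻¹ × id_R)` and `φ_S^{(m)} = (id_S × ψ_A)(ψ_B⁻¹ × id_S)`. -/
def ConcreteShift.Compatible (cs : ConcreteShift A B m) : Prop :=
  (∀ (as : EPath A m) (r r' : Edge cs.R) (bs : EPath B m)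
      (_ : IterRel cs.φR m as r r' bs)
      (r₁ : Edge cs.R) (s₁ : Edge cs.S) (k : r₁.tgt = s₁.src)
      (_ : cs.ψA ⟨(r₁, s₁), k⟩ = as) (k2 : s₁.tgt = r.src),
      r' = r₁ ∧ bs = cs.ψB ⟨(s₁, r), k2⟩) ∧
  (∀ (bs : EPath B m) (s s' : Edge cs.S) (as : EPath A m)
      (_ : IterRel cs.φS m bs s s' as)
      (s₁ : Edge cs.S) (r₁ : Edge cs.R) (k : s₁.tgt = r₁.src)
      (_ : cs.ψB ⟨(s₁, r₁), k⟩ = bs) (k2 : r₁.tgt = s.src),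
      s' = s₁ ∧ as = cs.ψA ⟨(r₁, s), k2⟩)

/-! Let `ρ` and `σ` be the chains of intermediate `R`- and `S`-edges computing `φ_R^{(m)}(as, r)`
and `φ_S^{(m)}(bs, s)`. Alignment says that the paths `w i = ψ_A(ρ_i, σ_i)` are consecutive
windows of length `m` in the word `as ++ as'`: `w_i ++ [as'_i] = as_i :: w_{i+1}`. Telescoping gives
`as ++ w_m = w_0 ++ as'`, so `w_0 = as` and `w_m = as'`, which is balance. -/

theorem List.ofFn_snoc {E : Type*} {n : ℕ} (p : Fin n → E) (x : E) :
    List.ofFn (Fin.snoc p x : Fin (n + 1) → E) = List.ofFn p ++ [x] := by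
  simp only [List.ofFn_succ', Fin.snoc_castSucc, Fin.snoc_last, List.concat_eq_append]

theorem Fin.first_and_last_window_of_snoc_eq_cons {E : Type*} {n : ℕ}
    (w : Fin (n + 1) → Fin n → E) (a a' : Fin n → E)
    (hw : ∀ i : Fin n,
      (Fin.snoc (w i.castSucc) (a' i) : Fin (n + 1) → E) = Fin.cons (a i) (w i.succ)) :
    w 0 = a ∧ w (Fin.last n) = a' := by
  have telescope : ∀ j : Fin (n + 1),
      (List.ofFn a).take j ++ List.ofFn (w j) = List.ofFn (w 0) ++ (List.ofFn a').take j := by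
    intro j
    induction j using Fin.induction with
    | zero => simp
    | succ i ih =>
      have step := congrArg List.ofFn (hw i)
      rw [List.ofFn_snoc, List.ofFn_cons] at step
      simp only [Fin.val_succ, Fin.val_castSucc, List.take_add_one, List.getElem?_ofFn,
        Fin.is_lt, dif_pos, Fin.eta, Option.toList_some] at ih ⊢
      rw [List.append_assoc, List.singleton_append, ← step, ← List.append_assoc, ih,
        List.append_assoc]
  have ends := telescope (Fin.last n)
  simp only [Fin.val_last, List.take_of_length_le, List.length_ofFn, le_refl] at ends
  obtain ⟨h0, hlast⟩ := List.append_inj ends (by simp)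
  exact ⟨(List.ofFn_injective h0).symm, List.ofFn_injective hlast⟩

section PathIsomorphisms

variable {α β : Type} {X : Matrix α α ℕ} {Y : Matrix β β ℕ} {M : Matrix α β ℕ} {N : Matrix β α ℕ}

/-- `(ψ × id_X)(id_M × χ)(φ × id_N) = id_X × ψ`, both sides read as maps into `E_X^{m+1}`. -/
def AlignedTriple
    (φ : FP (Edge X) (Edge M) Edge.tgt Edge.src ≃ FP (Edge M) (Edge Y) Edge.tgt Edge.src)
    (χ : FP (Edge Y) (Edge N) Edge.tgt Edge.src ≃ FP (Edge N) (Edge X) Edge.tgt Edge.src)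
    (ψ : FP (Edge M) (Edge N) Edge.tgt Edge.src → EPath X m) : Prop :=
  ∀ (a : Edge X) (r : Edge M) (s : Edge N)
    (h1 : a.tgt = r.src) (h2 : r.tgt = s.src)
    (r' : Edge M) (b : Edge Y) (_ : (φ ⟨(a, r), h1⟩).1 = (r', b))
    (h3 : b.tgt = s.src)
    (s' : Edge N) (a' : Edge X) (_ : (χ ⟨(b, s), h3⟩).1 = (s', a'))
    (h4 : r'.tgt = s'.src),
    (Fin.snoc (ψ ⟨(r', s'), h4⟩).1 a' : Fin (m + 1) → Edge X) = Fin.cons a (ψ ⟨(r, s), h2⟩).1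

theorem ConcreteShift.aligned_iff (cs : ConcreteShift A B m) :
    cs.Aligned ↔ AlignedTriple cs.φR cs.φS cs.ψA ∧ AlignedTriple cs.φS cs.φR cs.ψB :=
  Iff.rfl

theorem tgt_eq_src_of_chains
    (φ : FP (Edge X) (Edge M) Edge.tgt Edge.src ≃ FP (Edge M) (Edge Y) Edge.tgt Edge.src)
    (χ : FP (Edge Y) (Edge N) Edge.tgt Edge.src ≃ FP (Edge N) (Edge X) Edge.tgt Edge.src)
    (χ_src : ∀ p, ((χ p).1.1).src = (p.1.1).src)
    {as as' : EPath X m} {bs : EPath Y m} {ρ : Fin (m + 1) → Edge M} {σ : Fin (m + 1) → Edge N}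
    (hρ : ∀ i : Fin m, ∃ h : (as.1 i).tgt = (ρ i.succ).src,
      (φ ⟨(as.1 i, ρ i.succ), h⟩).1 = (ρ i.castSucc, bs.1 i))
    (hσ : ∀ i : Fin m, ∃ h : (bs.1 i).tgt = (σ i.succ).src,
      (χ ⟨(bs.1 i, σ i.succ), h⟩).1 = (σ i.castSucc, as'.1 i))
    (hlast : (ρ (Fin.last m)).tgt = (σ (Fin.last m)).src) (i : Fin (m + 1)) :
    (ρ i).tgt = (σ i).src := by
  cases i using Fin.lastCases with
  | last => exact hlast
  | cast i =>
    obtain ⟨h1, e1⟩ := hρ i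
    obtain ⟨h3, e3⟩ := hσ i
    have φ_composable := (φ ⟨(as.1 i, ρ i.succ), h1⟩).2
    have χ_preserves_src := χ_src ⟨(bs.1 i, σ i.succ), h3⟩
    rw [e1] at φ_composable
    rw [e3] at χ_preserves_src
    exact φ_composable.trans χ_preserves_src.symm

theorem AlignedTriple.eq_of_iterRel
    {φ : FP (Edge X) (Edge M) Edge.tgt Edge.src ≃ FP (Edge M) (Edge Y) Edge.tgt Edge.src}
    {χ : FP (Edge Y) (Edge N) Edge.tgt Edge.src ≃ FP (Edge N) (Edge X) Edge.tgt Edge.src}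
    {ψ : FP (Edge M) (Edge N) Edge.tgt Edge.src → EPath X m} (hal : AlignedTriple φ χ ψ)
    (χ_src : ∀ p, ((χ p).1.1).src = (p.1.1).src)
    {as as' : EPath X m} {bs : EPath Y m} {r r₀ : Edge M} {s s₀ : Edge N}
    (hR : IterRel φ m as r r₀ bs) (hS : IterRel χ m bs s s₀ as')
    (h : r.tgt = s.src) (h₀ : r₀.tgt = s₀.src) :
    ψ ⟨(r₀, s₀), h₀⟩ = as ∧ ψ ⟨(r, s), h⟩ = as' := by
  obtain ⟨ρ, rfl, rfl, hρ⟩ := hR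
  obtain ⟨σ, rfl, rfl, hσ⟩ := hS
  have comp := tgt_eq_src_of_chains φ χ χ_src hρ hσ h
  obtain ⟨h0, hlast⟩ := Fin.first_and_last_window_of_snoc_eq_cons
    (fun i => (ψ ⟨(ρ i, σ i), comp i⟩).1) as.1 as'.1 fun i => by
      obtain ⟨h1, e1⟩ := hρ i
      obtain ⟨h3, e3⟩ := hσ i
      exact hal _ _ _ h1 (comp i.succ) _ _ e1 h3 _ _ e3 (comp i.castSucc)
  exact ⟨Subtype.ext h0, Subtype.ext hlast⟩

end PathIsomorphisms

theorem stmt2_general {V W : Type} {A : Matrix V V ℕ} {B : Matrix W W ℕ} {m : ℕ}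
    (cs : ConcreteShift A B m)
    (h : cs.Aligned) : cs.Balanced := by
  obtain ⟨hψA, hψB⟩ := cs.aligned_iff.1 h
  exact ⟨fun _ _ _ _ hrs _ _ hR _ _ hS h₀ => hψA.eq_of_iterRel cs.φS_src hR hS hrs h₀,
    fun _ _ _ _ hsr _ _ hS _ _ hR h₀ => hψB.eq_of_iterRel cs.φR_src hS hR hsr h₀⟩

/-- for essential matrices, an aligned concrete shift is balanced. -/
theorem stmt2 {V W : Type} {A : Matrix V V ℕ} {B : Matrix W W ℕ} {m : ℕ}
    (hA : MatEssential A) (hB : MatEssential B) (cs : ConcreteShift A B m)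
    (h : cs.Aligned) : cs.Balanced :=
  stmt2_general cs h
end

section
/- Let A and B be essential square matrices over ℕ, and let (R, S, φ_R, φ_S, ψ_A, ψ_B) be a concrete shift between A and B with lag m. If the concrete shift is balanced, i.e., ψ_A^{-1} × ψ_A = (id_R × φ_S^{(m)})(φ_R^{(m)} × id_S) and ψ_B^{-1} × ψ_B = (id_S × φ_R^{(m)})(φ_S^{(m)} × id_R), then it is compatible, i.e., φ_R^{(m)} = (id_R × ψ_B)(ψ_A^{-1} × id_R) and φ_S^{(m)} = (id_S × ψ_A)(ψ_B^{-1} × id_S). -/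
variable {V W : Type} {A : Matrix V V ℕ} {B : Matrix W W ℕ} {m : ℕ}

/-! Given `φ_R^{(m)}(as, r) = (r', bs)` and `ψ_A(r₁, s₁) = as`, continue `r` by an `S`-edge `s`
(one exists because `B` has no zero rows and `ψ_B` is onto) and apply `φ_S^{(m)}` to `(bs, s)`,
getting `(s₀, as')`. The first balance identity gives `ψ_A(r', s₀) = as` and `ψ_A(r, s) = as'`,
so `(r', s₀) = (r₁, s₁)` by injectivity of `ψ_A`. Continuing `s` by an `R`-edge `t` and running the
same argument on `φ_R^{(m)}(as', t) = (t', bs')` identifies `t'` with `r`; the second balance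
identity for `(bs, s, t)` then reads `ψ_B(s₁, r) = bs`. The `S`-half is the `R`-half for the
shift with the roles of `A` and `B` exchanged. -/

lemma Fin.succ_mk_sub_one {n : ℕ} (hn : 0 < n) :
    (⟨n - 1, Nat.sub_lt hn Nat.one_pos⟩ : Fin n).succ = Fin.last n :=
  Fin.ext (by simp only [Fin.succ_mk, Fin.val_last]; omega)

lemma EPath.src_eq_tgt {α : Type} {X : Matrix α α ℕ} {m : ℕ} (p : EPath X m) {i j : Fin m}
    (hij : j.val = i.val + 1) : (p.1 j).src = (p.1 i).tgt := by
  obtain ⟨j, hj⟩ := j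
  subst hij
  exact p.2 i hj

lemma EPath.exists_src {α : Type} {X : Matrix α α ℕ} (hX : ∀ v, ∃ w, X v w ≠ 0)
    {m : ℕ} (hm : 0 < m) (v : α) : ∃ p : EPath X m, p.src hm = v := by
  have hedge : ∀ u, ∃ e : Edge X, e.src = u := fun u ↦
    let ⟨w, hw⟩ := hX u
    ⟨⟨(u, 0, w), Nat.pos_of_ne_zero hw⟩, rfl⟩
  choose f hf using hedge
  let walk : ℕ → Edge X := fun n ↦ Nat.rec (f v) (fun _ e ↦ f e.tgt) n
  exact ⟨⟨fun i ↦ walk i, fun i _ ↦ hf _⟩, hf v⟩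

namespace IterRel

variable {α β : Type} {X : Matrix α α ℕ} {Y : Matrix β β ℕ} {M : Matrix α β ℕ}
  {φ : FP (Edge X) (Edge M) Edge.tgt Edge.src ≃ FP (Edge M) (Edge Y) Edge.tgt Edge.src}
  {m : ℕ} {as : EPath X m} {e e' : Edge M} {bs : EPath Y m}

lemma tgt_eq_src (hIt : IterRel φ m as e e' bs) (hm : 0 < m) : as.tgt hm = e.src := by
  obtain ⟨ρ, rfl, -, hρ⟩ := hIt
  obtain ⟨hc, -⟩ := hρ ⟨m - 1, Nat.sub_lt hm Nat.one_pos⟩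
  rwa [Fin.succ_mk_sub_one hm] at hc

lemma out_tgt_eq_src (hIt : IterRel φ m as e e' bs) (hm : 0 < m) : e'.tgt = bs.src hm := by
  obtain ⟨ρ, -, rfl, hρ⟩ := hIt
  obtain ⟨hc, hφ⟩ := hρ ⟨0, hm⟩
  have hcomp := (φ ⟨(as.1 ⟨0, hm⟩, ρ (Fin.succ ⟨0, hm⟩)), hc⟩).2
  rw [hφ] at hcomp
  exact hcomp

lemma out_src (hsrc : ∀ p, ((φ p).1.1).src = (p.1.1).src) (hIt : IterRel φ m as e e' bs)
    (hm : 0 < m) : e'.src = as.src hm := by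
  obtain ⟨ρ, -, rfl, hρ⟩ := hIt
  obtain ⟨hc, hφ⟩ := hρ ⟨0, hm⟩
  have hsrc₀ := hsrc ⟨(as.1 ⟨0, hm⟩, ρ (Fin.succ ⟨0, hm⟩)), hc⟩
  rw [hφ] at hsrc₀
  exact hsrc₀

lemma path_tgt (htgt : ∀ p, ((φ p).1.2).tgt = (p.1.2).tgt) (hIt : IterRel φ m as e e' bs)
    (hm : 0 < m) : bs.tgt hm = e.tgt := by
  obtain ⟨ρ, rfl, -, hρ⟩ := hIt
  obtain ⟨hc, hφ⟩ := hρ ⟨m - 1, Nat.sub_lt hm Nat.one_pos⟩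
  have htgt₀ := htgt ⟨(as.1 ⟨m - 1, _⟩, ρ (Fin.succ ⟨m - 1, _⟩)), hc⟩
  rw [hφ] at htgt₀
  exact htgt₀.trans (congrArg (fun i ↦ (ρ i).tgt) (Fin.succ_mk_sub_one hm))

lemma exists_of_tgt_eq_src (hsrc : ∀ p, ((φ p).1.1).src = (p.1.1).src)
    (htgt : ∀ p, ((φ p).1.2).tgt = (p.1.2).tgt) (hm : 0 < m) (as : EPath X m) (e : Edge M)
    (h : as.tgt hm = e.src) : ∃ e' bs, IterRel φ m as e e' bs := by
  let Link (i : Fin (m + 1)) := {x : Edge M // ∀ j : Fin m, j.succ = i → (as.1 j).tgt = x.src}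
  have link_last : ∀ j : Fin m, j.succ = Fin.last m → (as.1 j).tgt = e.src := by
    intro j hj
    obtain rfl := Fin.succ_injective _ (hj.trans (Fin.succ_mk_sub_one hm).symm)
    exact h
  let back (i : Fin m) (x : Link i.succ) : Edge M := (φ ⟨(as.1 i, x.1), x.2 i rfl⟩).1.1
  have link_back (i : Fin m) (x : Link i.succ) :
      ∀ j : Fin m, j.succ = i.castSucc → (as.1 j).tgt = (back i x).src := by
    intro j hj
    have hij : i.val = j.val + 1 := by simpa [Fin.ext_iff] using hj.symm
    exact (as.src_eq_tgt hij).symm.trans (hsrc ⟨(as.1 i, x.1), x.2 i rfl⟩).symm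
  let chain : ∀ i, Link i :=
    Fin.reverseInduction ⟨e, link_last⟩ (fun i x ↦ ⟨back i x, link_back i x⟩)
  let ρ (i : Fin (m + 1)) : Edge M := (chain i).1
  have hρ (i : Fin m) : (as.1 i).tgt = (ρ i.succ).src := (chain i.succ).2 i rfl
  have ρ_castSucc (i : Fin m) : ρ i.castSucc = (φ ⟨(as.1 i, ρ i.succ), hρ i⟩).1.1 := by
    simp [ρ, chain, back]
  let bs (i : Fin m) : Edge Y := (φ ⟨(as.1 i, ρ i.succ), hρ i⟩).1.2
  have bs_path (i : ℕ) (hi : i + 1 < m) : (bs ⟨i + 1, hi⟩).src = (bs ⟨i, by omega⟩).tgt :=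
    calc (bs ⟨i + 1, hi⟩).src = (ρ (Fin.castSucc ⟨i + 1, hi⟩)).tgt :=
          (φ _).2.symm.trans (congrArg Edge.tgt (ρ_castSucc _).symm)
      _ = (bs ⟨i, by omega⟩).tgt :=
          (htgt ⟨(as.1 ⟨i, by omega⟩, ρ (Fin.succ ⟨i, by omega⟩)), hρ _⟩).symm
  exact ⟨ρ 0, ⟨bs, bs_path⟩, ρ, by simp [ρ, chain], rfl,
    fun i ↦ ⟨hρ i, Prod.ext (ρ_castSucc i).symm rfl⟩⟩

end IterRel

namespace ConcreteShift

def swap (cs : ConcreteShift A B m) : ConcreteShift B A m :=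
  ⟨cs.hm, cs.S, cs.R, cs.φS, cs.φR, cs.ψB, cs.ψA, cs.φS_src, cs.φS_tgt, cs.φR_src,
    cs.φR_tgt, cs.ψB_src, cs.ψB_tgt, cs.ψA_src, cs.ψA_tgt⟩

variable (cs : ConcreteShift A B m)

lemma exists_edgeR_src (hA : ∀ v, ∃ w, A v w ≠ 0) (v : V) : ∃ r : Edge cs.R, r.src = v := by
  obtain ⟨p, hp⟩ := EPath.exists_src hA cs.hm v
  refine ⟨(cs.ψA.symm p).1.1, ?_⟩
  rw [← cs.ψA_src, Equiv.apply_symm_apply, hp]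

variable {cs}

lemma Balanced.swap (h : cs.Balanced) : cs.swap.Balanced := ⟨h.2, h.1⟩

lemma Balanced.exists_iterRel_φS (h : cs.Balanced) (hB : ∀ w, ∃ v, B w v ≠ 0)
    {as : EPath A m} {r r' : Edge cs.R} {bs : EPath B m} (hIt : IterRel cs.φR m as r r' bs) :
    ∃ (s : Edge cs.S) (hs : r.tgt = s.src) (s₀ : Edge cs.S) (as' : EPath A m)
      (_ : IterRel cs.φS m bs s s₀ as') (k : r'.tgt = s₀.src),
      cs.ψA ⟨(r', s₀), k⟩ = as ∧ cs.ψA ⟨(r, s), hs⟩ = as' := by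
  obtain ⟨s, hs⟩ := cs.swap.exists_edgeR_src hB r.tgt
  have hbs : bs.tgt cs.hm = s.src := by rw [hIt.path_tgt cs.φR_tgt, hs]
  obtain ⟨s₀, as', hItS⟩ := IterRel.exists_of_tgt_eq_src cs.φS_src cs.φS_tgt cs.hm bs s hbs
  have k : r'.tgt = s₀.src := by rw [hIt.out_tgt_eq_src cs.hm, hItS.out_src cs.φS_src]
  exact ⟨s, hs.symm, s₀, as', hItS, k,
    h.1 as r s (hIt.tgt_eq_src cs.hm) hs.symm r' bs hIt s₀ as' hItS k⟩

lemma Balanced.compatible_fst (h : cs.Balanced) (hA : ∀ v, ∃ w, A v w ≠ 0)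
    (hB : ∀ w, ∃ v, B w v ≠ 0) :
    ∀ (as : EPath A m) (r r' : Edge cs.R) (bs : EPath B m)
      (_ : IterRel cs.φR m as r r' bs)
      (r₁ : Edge cs.R) (s₁ : Edge cs.S) (k : r₁.tgt = s₁.src)
      (_ : cs.ψA ⟨(r₁, s₁), k⟩ = as) (k2 : s₁.tgt = r.src),
      r' = r₁ ∧ bs = cs.ψB ⟨(s₁, r), k2⟩ := by
  intro as r r' bs hIt r₁ s₁ k hψ k2
  obtain ⟨s, hs, s₀, as', hItS, k₀, hψ₀, hψ'⟩ := h.exists_iterRel_φS hB hIt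
  obtain ⟨rfl, rfl⟩ := Prod.mk.inj (Subtype.mk.inj (cs.ψA.injective (hψ₀.trans hψ.symm)))
  refine ⟨rfl, ?_⟩
  obtain ⟨t, ht⟩ := cs.exists_edgeR_src hA s.tgt
  have has' : as'.tgt cs.hm = t.src := by
    rw [← hψ']
    exact (cs.ψA_tgt _).trans ht.symm
  obtain ⟨t', bs', hItR⟩ := IterRel.exists_of_tgt_eq_src cs.φR_src cs.φR_tgt cs.hm as' t has'
  obtain ⟨-, -, _, -, -, _, hψt, -⟩ := h.exists_iterRel_φS hB hItR
  obtain ⟨rfl, -⟩ := Prod.mk.inj (Subtype.mk.inj (cs.ψA.injective (hψt.trans hψ'.symm)))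
  have hbs : bs.tgt cs.hm = s.src := by rw [hIt.path_tgt cs.φR_tgt, hs]
  exact (h.2 bs s t hbs ht.symm _ as' hItS _ bs' hItR k2).1.symm

end ConcreteShift

/-- for essential matrices, a balanced concrete shift is compatible. -/
theorem stmt3 {V W : Type} {A : Matrix V V ℕ} {B : Matrix W W ℕ} {m : ℕ}
    (hA : MatEssential A) (hB : MatEssential B) (cs : ConcreteShift A B m)
    (h : cs.Balanced) : cs.Compatible :=
  ⟨h.compatible_fst hA.1 hB.1, h.swap.compatible_fst hB.1 hA.1⟩
end

section
/- Let Z be an A-B C*-correspondence (right Hilbert B-module with left action φ_Z : A → L(Z)) and for an ideal I ⊴ B define Z^{-1}(I) = {a ∈ A : φ_Z(a)Z ⊆ ZI}. Then for any family {I_j}_{j∈J} of closed ideals of B, Z^{-1}(⋂_j I_j) = ⋂_j Z^{-1}(I_j). -/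
/-! Basic framework: C*-correspondences over (possibly non-unital) C*-algebras,
interior tensor products (characterized by their universal properties),
closed ideals, and unitary isomorphisms of correspondences. -/

noncomputable section

/-- A (non-degenerate) A–B C*-correspondence: a right Hilbert `B`-module `X`
together with a left action of `A` by adjointable operators. -/
structure Corr (A B : Type) [NonUnitalCStarAlgebra A] [NonUnitalCStarAlgebra B] : Type 1 where
  X : Type
  [grp : NormedAddCommGroup X]
  [nsc : NormedSpace ℂ X]
  [cpl : CompleteSpace X]
  /-- the right action of `B` -/
  sm : X → B → X
  /-- the `B`-valued inner product (linear in the second variable) -/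
  ip : X → X → B
  /-- the left action of `A` -/
  φ : A → X → X
  sm_add : ∀ x y b, sm (x + y) b = sm x b + sm y b
  sm_add' : ∀ x b c, sm x (b + c) = sm x b + sm x c
  sm_mul : ∀ x b c, sm (sm x b) c = sm x (b * c)
  sm_smul : ∀ (t : ℂ) x b, sm (t • x) b = t • sm x b
  sm_smul' : ∀ (t : ℂ) x b, sm x (t • b) = t • sm x b
  ip_add : ∀ x y z, ip x (y + z) = ip x y + ip x z
  ip_smul : ∀ (t : ℂ) x y, ip x (t • y) = t • ip x y
  ip_sm : ∀ x y b, ip x (sm y b) = ip x y * b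
  ip_star : ∀ x y, star (ip x y) = ip y x
  ip_pos : ∀ x, ∃ b, ip x x = star b * b
  ip_norm : ∀ x, ‖x‖ ^ 2 = ‖ip x x‖
  φ_add : ∀ a x y, φ a (x + y) = φ a x + φ a y
  φ_add' : ∀ a b x, φ (a + b) x = φ a x + φ b x
  φ_smul : ∀ a (t : ℂ) x, φ a (t • x) = t • φ a x
  φ_smul' : ∀ (t : ℂ) a x, φ (t • a) x = t • φ a x
  φ_mul : ∀ a b x, φ (a * b) x = φ a (φ b x)
  φ_adj : ∀ a x y, ip (φ a x) y = ip x (φ (star a) y)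
  /-- non-degeneracy of the left action -/
  nondeg : closure (Submodule.span ℂ {z | ∃ a x, z = φ a x} : Set X) = Set.univ

attribute [instance] Corr.grp Corr.nsc Corr.cpl

variable {A B C : Type} [NonUnitalCStarAlgebra A] [NonUnitalCStarAlgebra B]
  [NonUnitalCStarAlgebra C]

/-- `Z.setR I` is the closed submodule `Z·I` of `Z`. -/
def Corr.setR (Z : Corr A B) (I : Set B) : Set Z.X :=
  closure (Submodule.span ℂ {x | ∃ ξ b, b ∈ I ∧ x = Z.sm ξ b} : Set Z.X)

/-- `Z.setL I` is the closed subspace `I·Z` of `Z`. -/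
def Corr.setL (Z : Corr A B) (I : Set A) : Set Z.X :=
  closure (Submodule.span ℂ {x | ∃ a ξ, a ∈ I ∧ x = Z.φ a ξ} : Set Z.X)

/-- `Z⁻¹(I) = {a ∈ A : φ_Z(a)Z ⊆ ZI}`. -/
def Corr.inv (Z : Corr A B) (I : Set B) : Set A := {a | ∀ ξ, Z.φ a ξ ∈ Z.setR I}

/-- The closed ideal of `B` generated by the inner products of `Z`. -/
def Corr.ipSet (Z : Corr A B) : Set B :=
  closure (Submodule.span ℂ {b | ∃ x y, b = Z.ip x y} : Set B)

/-- A generalized compact operator on the underlying Hilbert module of a correspondence: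
one that is approximable in operator norm by finite sums of "rank one" operators
`θ_{ξ,η} : z ↦ ξ·⟨η,z⟩`. -/
def Corr.IsCompactOp (Z : Corr A B) (f : Z.X → Z.X) : Prop :=
  ∀ ε > (0 : ℝ), ∃ (n : ℕ) (ξ η : Fin n → Z.X),
    ∀ z, ‖f z - ∑ i, Z.sm (ξ i) (Z.ip (η i) z)‖ ≤ ε * ‖z‖

/-- A closed (two-sided, automatically self-adjoint) ideal of a C*-algebra, as a set. -/
structure IsCIdeal {B : Type} [NonUnitalCStarAlgebra B] (I : Set B) : Prop where
  isClosed : IsClosed I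
  zero_mem : (0 : B) ∈ I
  add_mem : ∀ x y, x ∈ I → y ∈ I → x + y ∈ I
  smul_mem : ∀ (t : ℂ) x, x ∈ I → t • x ∈ I
  mul_left_mem : ∀ b x, x ∈ I → b * x ∈ I
  mul_right_mem : ∀ b x, x ∈ I → x * b ∈ I

/-- `t : Z₁ × Z₂ → T` exhibits `T` as the interior tensor product `Z₁ ⊗_B Z₂`. -/
structure IsTensor (Z₁ : Corr A B) (Z₂ : Corr B C) (T : Corr A C)
    (t : Z₁.X → Z₂.X → T.X) : Prop where
  add_left : ∀ x x' y, t (x + x') y = t x y + t x' y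
  add_right : ∀ x y y', t x (y + y') = t x y + t x y'
  smul_left : ∀ (c : ℂ) x y, t (c • x) y = c • t x y
  balanced : ∀ x b y, t (Z₁.sm x b) y = t x (Z₂.φ b y)
  sm_right : ∀ x y c, t x (Z₂.sm y c) = T.sm (t x y) c
  act_left : ∀ a x y, T.φ a (t x y) = t (Z₁.φ a x) y
  inner : ∀ x x' y y', T.ip (t x y) (t x' y') = Z₂.ip y (Z₂.φ (Z₁.ip x x') y')
  dense : closure (Submodule.span ℂ {z | ∃ x y, z = t x y} : Set T.X) = Set.univ

/-- `X ≅ Z₁ ⊗ Z₂` (unitary isomorphism with the interior tensor product). -/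
def IsTensorProd (Z₁ : Corr A B) (Z₂ : Corr B C) (T : Corr A C) : Prop :=
  ∃ t, IsTensor Z₁ Z₂ T t

/-- A unitary isomorphism of A–B correspondences. -/
def CorrIso (Z W : Corr A B) : Prop :=
  ∃ u : Z.X → W.X, Function.Surjective u ∧ (∀ x y, u (x + y) = u x + u y) ∧
    (∀ (c : ℂ) x, u (c • x) = c • u x) ∧ (∀ a x, u (Z.φ a x) = W.φ a (u x)) ∧
    (∀ x b, u (Z.sm x b) = W.sm (u x) b) ∧ (∀ x y, W.ip (u x) (u y) = Z.ip x y)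

end

/-! For a closed ideal `I` of `B`, a vector `z` lies in `Z·I` if and only if `⟨z, z⟩ ∈ I`.
If `z ∈ Z·I`, then `⟨z, z⟩ ∈ I` because `⟨z, ·⟩` is continuous (by polarization) and maps each
`ξ b` with `b ∈ I` into `I`. Conversely, if `⟨z, z⟩ ∈ I`, take `b = ⟨z, z⟩ h(⟨z, z⟩)` with
`h(t) = t / (δ² + t²)`: then `b ∈ I`, and `‖z - z b‖² = ‖(1 - b)⟨z, z⟩(1 - b)‖` is at most
`sup_t |t| δ⁴ / (δ² + t²)² ≤ δ`. Hence `a ∈ Z⁻¹(I)` iff `⟨φ(a)ξ, φ(a)ξ⟩ ∈ I` for all `ξ`,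
a condition that commutes with intersections. -/

namespace IsCIdeal

variable {B : Type} [NonUnitalCStarAlgebra B]

def toSubmodule {I : Set B} (hI : IsCIdeal I) : Submodule ℂ B where
  carrier := I
  zero_mem' := hI.zero_mem
  add_mem' := hI.add_mem _ _
  smul_mem' := hI.smul_mem

lemma iInter {J : Type} {I : J → Set B} (hI : ∀ j, IsCIdeal (I j)) : IsCIdeal (⋂ j, I j) where
  isClosed := isClosed_iInter fun j => (hI j).isClosed
  zero_mem := Set.mem_iInter.2 fun j => (hI j).zero_mem
  add_mem x y hx hy := Set.mem_iInter.2 fun j =>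
    (hI j).add_mem x y (Set.mem_iInter.1 hx j) (Set.mem_iInter.1 hy j)
  smul_mem t x hx := Set.mem_iInter.2 fun j => (hI j).smul_mem t x (Set.mem_iInter.1 hx j)
  mul_left_mem b x hx := Set.mem_iInter.2 fun j => (hI j).mul_left_mem b x (Set.mem_iInter.1 hx j)
  mul_right_mem b x hx :=
    Set.mem_iInter.2 fun j => (hI j).mul_right_mem b x (Set.mem_iInter.1 hx j)

end IsCIdeal

lemma abs_mul_sq_div_sq_add_sq_le {δ : ℝ} (hδ : 0 < δ) (t : ℝ) :
    |t * (δ ^ 2 / (δ ^ 2 + t ^ 2)) ^ 2| ≤ δ := by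
  have hd : 0 < δ ^ 2 + t ^ 2 := by positivity
  rw [abs_mul, abs_pow, abs_of_pos (by positivity : 0 < δ ^ 2 / (δ ^ 2 + t ^ 2)), div_pow,
    ← mul_div_assoc, div_le_iff₀ (by positivity)]
  have hamgm : 2 * δ * |t| ≤ δ ^ 2 + t ^ 2 := by
    nlinarith [sq_nonneg (δ - |t|), sq_abs t]
  nlinarith [mul_le_mul_of_nonneg_left hamgm (by positivity : 0 ≤ δ ^ 3),
    mul_le_mul_of_nonneg_left (le_add_of_nonneg_right (sq_nonneg t) : δ ^ 2 ≤ δ ^ 2 + t ^ 2) hd.le]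

/-- With `b = a * e`, the quantity estimated is `(1 - b) a (1 - b)` computed in the unitization. -/
lemma IsSelfAdjoint.exists_isSelfAdjoint_mul_norm_sub_le {B : Type} [NonUnitalCStarAlgebra B]
    {a : B} (ha : IsSelfAdjoint a) {δ : ℝ} (hδ : 0 < δ) :
    ∃ e : B, IsSelfAdjoint (a * e) ∧
      ‖a - a * e * a - a * (a * e) + a * e * a * (a * e)‖ ≤ δ := by
  set h : ℝ → ℝ := fun t => t / (δ ^ 2 + t ^ 2)
  have hcont : Continuous h := by
    refine continuous_id.div (by fun_prop) fun t => ?_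
    positivity
  have hid : cfcₙ (fun t : ℝ => t) a = a := cfcₙ_id' ℝ a
  have hb : a * cfcₙ h a = cfcₙ (fun t => t * h t) a := by
    rw [cfcₙ_mul (fun t : ℝ => t) h a, hid]
  have hexpand : (fun t : ℝ => t * (1 - t * h t) ^ 2) =
      fun t => t - (t * h t) * t - t * (t * h t) + (t * h t) * t * (t * h t) := by
    funext t; ring
  have hcfc : a - a * cfcₙ h a * a - a * (a * cfcₙ h a) + a * cfcₙ h a * a * (a * cfcₙ h a)
      = cfcₙ (fun t => t * (1 - t * h t) ^ 2) a := by
    rw [hexpand, cfcₙ_add _ _ a, cfcₙ_sub _ _ a, cfcₙ_sub _ _ a, cfcₙ_mul _ _ a, cfcₙ_mul _ _ a,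
      cfcₙ_mul _ _ a, cfcₙ_mul _ _ a, cfcₙ_mul _ _ a, cfcₙ_mul _ _ a, hid, hb]
  refine ⟨cfcₙ h a, hb ▸ cfcₙ_predicate _ a, hcfc ▸ norm_cfcₙ_le fun t _ => ?_⟩
  have hone_sub : 1 - t * h t = δ ^ 2 / (δ ^ 2 + t ^ 2) := by
    have : δ ^ 2 + t ^ 2 ≠ 0 := by positivity
    simp only [h]
    field_simp
    ring
  rw [Real.norm_eq_abs, hone_sub]
  exact abs_mul_sq_div_sq_add_sq_le hδ t

namespace Corr

variable {A B : Type} [NonUnitalCStarAlgebra A] [NonUnitalCStarAlgebra B] (Z : Corr A B)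

def ipₗ (x : Z.X) : Z.X →ₗ[ℂ] B where
  toFun := Z.ip x
  map_add' := Z.ip_add x
  map_smul' t y := Z.ip_smul t x y

lemma ip_sub_right (x y w : Z.X) : Z.ip x (y - w) = Z.ip x y - Z.ip x w :=
  map_sub (Z.ipₗ x) y w

lemma ip_zero_right (x : Z.X) : Z.ip x 0 = 0 :=
  map_zero (Z.ipₗ x)

lemma ip_add_left (x y w : Z.X) : Z.ip (x + y) w = Z.ip x w + Z.ip y w := by
  rw [← Z.ip_star, Z.ip_add, star_add, Z.ip_star, Z.ip_star]

lemma ip_sub_left (x y w : Z.X) : Z.ip (x - y) w = Z.ip x w - Z.ip y w := by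
  rw [← Z.ip_star, Z.ip_sub_right, star_sub, Z.ip_star, Z.ip_star]

lemma ip_smul_left (t : ℂ) (x y : Z.X) : Z.ip (t • x) y = star t • Z.ip x y := by
  rw [← Z.ip_star, Z.ip_smul, star_smul, Z.ip_star]

lemma ip_sm_left (x y : Z.X) (b : B) : Z.ip (Z.sm x b) y = star b * Z.ip x y := by
  rw [← Z.ip_star, Z.ip_sm, star_mul, Z.ip_star]

lemma isSelfAdjoint_ip_self (x : Z.X) : IsSelfAdjoint (Z.ip x x) :=
  Z.ip_star x x

lemma ip_polarization (x y : Z.X) :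
    (4 : ℂ) • Z.ip x y =
      ∑ k : Fin 4, star (Complex.I ^ (k : ℕ)) •
        Z.ip (x + Complex.I ^ (k : ℕ) • y) (x + Complex.I ^ (k : ℕ) • y) := by
  simp only [Fin.sum_univ_four, Z.ip_add, Z.ip_add_left, Z.ip_smul, Z.ip_smul_left, smul_add,
    smul_smul]
  norm_num [pow_succ, Complex.I_mul_I]
  module

lemma norm_ip_le_sq (x y : Z.X) : ‖Z.ip x y‖ ≤ (‖x‖ + ‖y‖) ^ 2 := by
  have hterm : ∀ k : Fin 4, ‖star (Complex.I ^ (k : ℕ)) •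
      Z.ip (x + Complex.I ^ (k : ℕ) • y) (x + Complex.I ^ (k : ℕ) • y)‖ ≤ (‖x‖ + ‖y‖) ^ 2 := by
    intro k
    have hunit : ‖Complex.I ^ (k : ℕ)‖ = 1 := by simp
    rw [norm_smul, norm_star, hunit, one_mul, ← Z.ip_norm]
    gcongr
    calc ‖x + Complex.I ^ (k : ℕ) • y‖ ≤ ‖x‖ + ‖Complex.I ^ (k : ℕ) • y‖ := norm_add_le _ _
      _ = ‖x‖ + ‖y‖ := by rw [norm_smul, hunit, one_mul]
  have hpolar : 4 * ‖Z.ip x y‖ ≤ 4 * (‖x‖ + ‖y‖) ^ 2 :=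
    calc 4 * ‖Z.ip x y‖ = ‖(4 : ℂ) • Z.ip x y‖ := by rw [norm_smul]; norm_num
      _ ≤ ∑ k : Fin 4, (‖x‖ + ‖y‖) ^ 2 := by
        rw [Z.ip_polarization]
        exact (norm_sum_le _ _).trans (Finset.sum_le_sum fun k _ => hterm k)
      _ = 4 * (‖x‖ + ‖y‖) ^ 2 := by simp
  linarith

lemma norm_ip_le (x y : Z.X) : ‖Z.ip x y‖ ≤ (‖x‖ + 1) ^ 2 * ‖y‖ := by
  rcases eq_or_ne y 0 with rfl | hy
  · simp [Z.ip_zero_right]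
  set t := √‖y‖
  have ht : 0 < t := Real.sqrt_pos.2 (norm_pos_iff.2 hy)
  have ht2 : t ^ 2 = ‖y‖ := Real.sq_sqrt (norm_nonneg y)
  -- rescaling `x` by `t` and `y` by `t⁻¹` makes the polarization bound homogeneous in `y`
  have hscale : Z.ip x y = Z.ip ((t : ℂ) • x) ((t : ℂ)⁻¹ • y) := by
    rw [Z.ip_smul, Z.ip_smul_left, smul_smul, Complex.star_def, Complex.conj_ofReal,
      inv_mul_cancel₀ (by exact_mod_cast ht.ne'), one_smul]
  calc ‖Z.ip x y‖ ≤ (‖(t : ℂ) • x‖ + ‖(t : ℂ)⁻¹ • y‖) ^ 2 := hscale ▸ Z.norm_ip_le_sq _ _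
    _ = (t * ‖x‖ + t⁻¹ * t ^ 2) ^ 2 := by
      rw [norm_smul, norm_smul, norm_inv, Complex.norm_real, Real.norm_of_nonneg ht.le, ht2]
    _ = (‖x‖ + 1) ^ 2 * ‖y‖ := by
      rw [← ht2]
      field_simp

lemma continuous_ip_right (x : Z.X) : Continuous (Z.ip x) :=
  AddMonoidHomClass.continuous_of_bound (Z.ipₗ x) _ (Z.norm_ip_le x)

lemma ip_mem_of_mem_setR {I : Set B} (hI : IsCIdeal I) (w : Z.X) {z : Z.X}
    (hz : z ∈ Z.setR I) : Z.ip w z ∈ I := by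
  have hspan : Submodule.span ℂ {x | ∃ ξ b, b ∈ I ∧ x = Z.sm ξ b} ≤
      hI.toSubmodule.comap (Z.ipₗ w) := by
    rw [Submodule.span_le]
    rintro _ ⟨ξ, b, hb, rfl⟩
    show Z.ip w (Z.sm ξ b) ∈ I
    rw [Z.ip_sm]
    exact hI.mul_left_mem _ b hb
  exact closure_minimal hspan (hI.isClosed.preimage (Z.continuous_ip_right w)) hz

lemma mem_setR_of_ip_self_mem {I : Set B} (hI : IsCIdeal I) {z : Z.X} (hz : Z.ip z z ∈ I) :
    z ∈ Z.setR I := by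
  rw [Corr.setR, Metric.mem_closure_iff]
  intro ε hε
  have hδ : 0 < ε ^ 2 / 2 := by positivity
  obtain ⟨e, hsa, hle⟩ := (Z.isSelfAdjoint_ip_self z).exists_isSelfAdjoint_mul_norm_sub_le hδ
  set b := Z.ip z z * e
  refine ⟨Z.sm z b, Submodule.subset_span ⟨z, b, hI.mul_right_mem e _ hz, rfl⟩, ?_⟩
  have hsq : ‖z - Z.sm z b‖ ^ 2 ≤ ε ^ 2 / 2 := by
    rw [Z.ip_norm, Z.ip_sub_left, Z.ip_sub_right, Z.ip_sub_right, Z.ip_sm, Z.ip_sm_left,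
      Z.ip_sm_left, Z.ip_sm, hsa.star_eq]
    convert hle using 2
    noncomm_ring
  rw [dist_eq_norm]
  nlinarith [norm_nonneg (z - Z.sm z b)]

lemma mem_setR_iff_ip_self_mem {I : Set B} (hI : IsCIdeal I) {z : Z.X} :
    z ∈ Z.setR I ↔ Z.ip z z ∈ I :=
  ⟨Z.ip_mem_of_mem_setR hI z, Z.mem_setR_of_ip_self_mem hI⟩

end Corr

/-- `Z⁻¹(⋂ⱼ Iⱼ) = ⋂ⱼ Z⁻¹(Iⱼ)` for a family of closed ideals of `B`. -/
theorem stmt5 {A B : Type} [NonUnitalCStarAlgebra A] [NonUnitalCStarAlgebra B]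
    (Z : Corr A B) {J : Type} (I : J → Set B) (hI : ∀ j, IsCIdeal (I j)) :
    Z.inv (⋂ j, I j) = ⋂ j, Z.inv (I j) := by
  ext a
  simp only [Corr.inv, Set.mem_iInter, Set.mem_ofPred_eq,
    Z.mem_setR_iff_ip_self_mem (IsCIdeal.iInter hI), Z.mem_setR_iff_ip_self_mem (hI _)]
  exact forall_comm
end

section
/- Let X be a right Hilbert B-module, φ : A → L(X) a *-homomorphism, I ⊴ A and J ⊴ B closed ideals with φ(I)X ⊆ XJ. Then there is a well-defined *-homomorphism φ_{I,J} : A/I → L(X_J) satisfying φ_{I,J}([a]_I)([ξ]_J) = [φ(a)ξ]_J for a ∈ A, ξ ∈ X, where X_J = X/XJ is the quotient Hilbert A/I–B/J module. Moreover, if φ maps A into K(X), then φ_{I,J} maps A/I into K(X_J). -/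
/-! Right Hilbert C*-modules over a (possibly non-unital) C*-algebra. -/

noncomputable section

/-- A right Hilbert `B`-module. -/
structure HilbMod (B : Type) [NonUnitalCStarAlgebra B] : Type 1 where
  X : Type
  [grp : NormedAddCommGroup X]
  [nsc : NormedSpace ℂ X]
  [cpl : CompleteSpace X]
  sm : X → B → X
  ip : X → X → B
  sm_add : ∀ x y b, sm (x + y) b = sm x b + sm y b
  sm_add' : ∀ x b c, sm x (b + c) = sm x b + sm x c
  sm_mul : ∀ x b c, sm (sm x b) c = sm x (b * c)
  sm_smul : ∀ (t : ℂ) x b, sm (t • x) b = t • sm x b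
  sm_smul' : ∀ (t : ℂ) x b, sm x (t • b) = t • sm x b
  ip_add : ∀ x y z, ip x (y + z) = ip x y + ip x z
  ip_smul : ∀ (t : ℂ) x y, ip x (t • y) = t • ip x y
  ip_sm : ∀ x y b, ip x (sm y b) = ip x y * b
  ip_star : ∀ x y, star (ip x y) = ip y x
  ip_pos : ∀ x, ∃ b, ip x x = star b * b
  ip_norm : ∀ x, ‖x‖ ^ 2 = ‖ip x x‖

attribute [instance] HilbMod.grp HilbMod.nsc HilbMod.cpl

variable {B : Type} [NonUnitalCStarAlgebra B]

/-- `Z.setR J` is the closed submodule `Z·J`. -/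
def HilbMod.setR (Z : HilbMod B) (J : Set B) : Set Z.X :=
  closure (Submodule.span ℂ {x | ∃ ξ b, b ∈ J ∧ x = Z.sm ξ b} : Set Z.X)

/-- A generalized compact operator on a Hilbert module: approximable in operator norm by
finite sums of rank-one operators `θ_{ξ,η} : z ↦ ξ·⟨η,z⟩`. -/
def HilbMod.IsCompactOp (Z : HilbMod B) (f : Z.X → Z.X) : Prop :=
  ∀ ε > (0 : ℝ), ∃ (n : ℕ) (ξ η : Fin n → Z.X),
    ∀ z, ‖f z - ∑ i, Z.sm (ξ i) (Z.ip (η i) z)‖ ≤ ε * ‖z‖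

/-- `π : B → B'` realizes `B'` as the quotient C*-algebra `B/I`. -/
structure IsQuotAlg {B B' : Type} [NonUnitalCStarAlgebra B] [NonUnitalCStarAlgebra B']
    (π : B → B') (I : Set B) : Prop where
  surj : Function.Surjective π
  map_add : ∀ a b, π (a + b) = π a + π b
  map_mul : ∀ a b, π (a * b) = π a * π b
  map_star : ∀ a, π (star a) = star (π a)
  map_smul : ∀ (t : ℂ) a, π (t • a) = t • π a
  ker : ∀ a, π a = 0 ↔ a ∈ I

/-! The operator `φ_{I,J}([a]_I)` is forced by `[ξ]_J ↦ [φ(a)ξ]_J`. It is well defined because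
`φ(I)X ⊆ XJ` and because an operator `T` with an adjoint preserves `XJ`: for `ζ ∈ XJ` every
`⟨η, Tζ⟩ = ⟨T^*η, ζ⟩` lies in `J`, so `[Tζ]_J` is orthogonal to the whole quotient. The
*-homomorphism identities then descend along the two surjections. Compactness descends because the
quotient map is contractive and, by the open mapping theorem, every vector of `X_J` lifts to a
vector of comparable norm, so finite-rank approximants of `φ(a)` map to finite-rank approximants
of `φ_{I,J}([a]_I)`. -/

theorem Function.Surjective.exists_lift₂ {α β α' β' γ : Type*} {p : α → α'} {r : β → β'}
    (hp : p.Surjective) (hr : r.Surjective) (f : α → β → γ)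
    (hf : ∀ a₁ a₂ b₁ b₂, p a₁ = p a₂ → r b₁ = r b₂ → f a₁ b₁ = f a₂ b₂) :
    ∃ F : α' → β' → γ, ∀ a b, F (p a) (r b) = f a b :=
  ⟨fun a' b' => f (Function.surjInv hp a') (Function.surjInv hr b'),
    fun _ _ => hf _ _ _ _ (Function.surjInv_eq hp _) (Function.surjInv_eq hr _)⟩

def IsCIdeal.toSubmodule_s8 {J : Set B} (hJ : IsCIdeal J) : Submodule ℂ B where
  carrier := J
  add_mem' := hJ.add_mem _ _
  zero_mem' := hJ.zero_mem
  smul_mem' t _ := hJ.smul_mem t _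

namespace HilbMod

variable (Z : HilbMod B)

def ipₗ (η : Z.X) : Z.X →ₗ[ℂ] B where
  toFun := Z.ip η
  map_add' := Z.ip_add η
  map_smul' t := Z.ip_smul t η

lemma add_ip (x y z : Z.X) : Z.ip (x + y) z = Z.ip x z + Z.ip y z := by
  rw [← Z.ip_star z, Z.ip_add, star_add, Z.ip_star, Z.ip_star]

lemma smul_ip (t : ℂ) (x y : Z.X) : Z.ip (t • x) y = star t • Z.ip x y := by
  rw [← Z.ip_star y, Z.ip_smul, star_smul, Z.ip_star]

lemma polarization (x y : Z.X) :
    (4 : ℂ) • Z.ip x y =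
      ∑ k : Fin 4, star (Complex.I ^ (k : ℕ)) •
        Z.ip (x + Complex.I ^ (k : ℕ) • y) (x + Complex.I ^ (k : ℕ) • y) := by
  simp only [Fin.sum_univ_four, Z.ip_add, Z.add_ip, Z.ip_smul, Z.smul_ip, smul_add, smul_smul]
  match_scalars <;> simp [pow_succ]; ring_nf

lemma norm_ip_le (x y : Z.X) : ‖Z.ip x y‖ ≤ (‖x‖ + ‖y‖) ^ 2 := by
  have hterm (k : ℕ) :
      ‖star (Complex.I ^ k) • Z.ip (x + Complex.I ^ k • y) (x + Complex.I ^ k • y)‖ ≤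
        (‖x‖ + ‖y‖) ^ 2 := by
    rw [norm_smul, norm_star, norm_pow, Complex.norm_I, one_pow, one_mul, ← Z.ip_norm]
    gcongr
    exact (norm_add_le _ _).trans (by simp [norm_smul])
  have h4 : 4 * ‖Z.ip x y‖ ≤ 4 * (‖x‖ + ‖y‖) ^ 2 := by
    calc 4 * ‖Z.ip x y‖ = ‖(4 : ℂ) • Z.ip x y‖ := by rw [norm_smul]; norm_num
      _ ≤ ∑ _k : Fin 4, (‖x‖ + ‖y‖) ^ 2 := by
        rw [Z.polarization]
        exact norm_sum_le_of_le _ fun k _ => hterm k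
      _ = 4 * (‖x‖ + ‖y‖) ^ 2 := by simp
  linarith

lemma continuous_ip (η : Z.X) : Continuous (Z.ip η) := by
  obtain ⟨C, hC⟩ := (Z.ipₗ η).bound_of_ball_bound one_pos ((‖η‖ + 1) ^ 2) fun z hz =>
    (Z.norm_ip_le η z).trans (by gcongr; exact (mem_ball_zero_iff.mp hz).le)
  exact AddMonoidHomClass.continuous_of_bound (Z.ipₗ η) C hC

lemma eq_zero_of_ip_self_eq_zero {x : Z.X} (h : Z.ip x x = 0) : x = 0 := by
  have h2 : ‖x‖ ^ 2 = 0 := by rw [Z.ip_norm, h, norm_zero]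
  simpa using h2

lemma ip_mem_of_mem_setR {J : Set B} (hJ : IsCIdeal J) (η : Z.X) {ζ : Z.X}
    (hζ : ζ ∈ Z.setR J) : Z.ip η ζ ∈ J := by
  have hspan : Submodule.span ℂ {x | ∃ ξ b, b ∈ J ∧ x = Z.sm ξ b} ≤
      hJ.toSubmodule_s8.comap (Z.ipₗ η) := by
    rw [Submodule.span_le]
    rintro _ ⟨ξ, b, hb, rfl⟩
    change Z.ip η (Z.sm ξ b) ∈ J
    rw [Z.ip_sm]
    exact hJ.mul_left_mem _ _ hb
  exact closure_minimal hspan (hJ.isClosed.preimage (Z.continuous_ip η)) hζ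

end HilbMod

namespace IsQuotAlg

variable {A A' : Type} [NonUnitalCStarAlgebra A] [NonUnitalCStarAlgebra A'] {π : A → A'}
  {I : Set A}

def toNonUnitalStarAlgHom (hπ : IsQuotAlg π I) : A →⋆ₙₐ[ℂ] A' where
  toFun := π
  map_smul' := hπ.map_smul
  map_zero' := by simpa using hπ.map_smul 0 0
  map_add' := hπ.map_add
  map_mul' := hπ.map_mul
  map_star' := hπ.map_star

lemma norm_apply_le (hπ : IsQuotAlg π I) (a : A) : ‖π a‖ ≤ ‖a‖ :=
  NonUnitalStarAlgHom.norm_apply_le hπ.toNonUnitalStarAlgHom a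

lemma sub_mem_of_apply_eq (hπ : IsQuotAlg π I) {a b : A} (h : π a = π b) : a - b ∈ I := by
  rw [← hπ.ker]
  exact (map_sub hπ.toNonUnitalStarAlgHom a b).trans (sub_eq_zero.mpr h)

end IsQuotAlg

structure IsQuotMod {B' : Type} [NonUnitalCStarAlgebra B'] (X : HilbMod B) (Q : HilbMod B')
    (π : B → B') (J : Set B) (q : X.X → Q.X) : Prop where
  surj : Function.Surjective q
  map_add : ∀ ξ η, q (ξ + η) = q ξ + q η
  map_smul : ∀ (t : ℂ) ξ, q (t • ξ) = t • q ξ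
  ker : ∀ ξ, q ξ = 0 ↔ ξ ∈ X.setR J
  ip : ∀ ξ η, Q.ip (q ξ) (q η) = π (X.ip ξ η)
  sm : ∀ ξ b, Q.sm (q ξ) (π b) = q (X.sm ξ b)

namespace IsQuotMod

variable {B' : Type} [NonUnitalCStarAlgebra B'] {X : HilbMod B} {Q : HilbMod B'} {π : B → B'}
  {J : Set B} {q : X.X → Q.X}

def toLinearMap (hq : IsQuotMod X Q π J q) : X.X →ₗ[ℂ] Q.X where
  toFun := q
  map_add' := hq.map_add
  map_smul' := hq.map_smul

lemma map_sub (hq : IsQuotMod X Q π J q) (ξ η : X.X) : q (ξ - η) = q ξ - q η :=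
  _root_.map_sub hq.toLinearMap ξ η

lemma map_sum (hq : IsQuotMod X Q π J q) {ι : Type*} (s : Finset ι) (ξ : ι → X.X) :
    q (∑ i ∈ s, ξ i) = ∑ i ∈ s, q (ξ i) :=
  _root_.map_sum hq.toLinearMap ξ s

lemma norm_apply_le (hq : IsQuotMod X Q π J q) (hπ : IsQuotAlg π J) (ξ : X.X) :
    ‖q ξ‖ ≤ ‖ξ‖ := by
  have hsq : ‖q ξ‖ ^ 2 ≤ ‖ξ‖ ^ 2 := by
    rw [Q.ip_norm, X.ip_norm, hq.ip]
    exact hπ.norm_apply_le _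
  exact pow_le_pow_iff_left₀ (norm_nonneg _) (norm_nonneg _) two_ne_zero |>.mp hsq

/-- An operator with an adjoint maps `X·J` into `X·J`. -/
lemma apply_eq_zero_of_mem_setR (hq : IsQuotMod X Q π J q) (hπ : IsQuotAlg π J)
    (hJ : IsCIdeal J) {T T' : X.X → X.X} (hT : ∀ x y, X.ip (T' x) y = X.ip x (T y))
    {ζ : X.X} (hζ : ζ ∈ X.setR J) : q (T ζ) = 0 := by
  obtain ⟨y, hy⟩ := hq.surj (q (T ζ))
  have h : Q.ip (q y) (q (T ζ)) = 0 := by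
    rw [hq.ip, ← hT, (hπ.ker _).mpr (X.ip_mem_of_mem_setR hJ _ hζ)]
  exact Q.eq_zero_of_ip_self_eq_zero (hy ▸ h)

lemma isCompactOp_of_comp_eq (hq : IsQuotMod X Q π J q) (hπ : IsQuotAlg π J)
    {f : X.X → X.X} {g : Q.X → Q.X} (hfg : ∀ ξ, g (q ξ) = q (f ξ)) (hf : X.IsCompactOp f) :
    Q.IsCompactOp g := by
  intro ε hε
  let qL : X.X →L[ℂ] Q.X :=
    hq.toLinearMap.mkContinuous 1 fun ξ => (one_mul ‖ξ‖).symm ▸ hq.norm_apply_le hπ ξ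
  obtain ⟨C, hC, hlift⟩ := qL.exists_preimage_norm_le hq.surj
  obtain ⟨n, ξ, η, hfξη⟩ := hf (ε / C) (by positivity)
  refine ⟨n, fun i => q (ξ i), fun i => q (η i), fun w => ?_⟩
  obtain ⟨z, hzw, hz⟩ := hlift w
  change q z = w at hzw
  subst hzw
  have hsum : ∑ i, Q.sm (q (ξ i)) (Q.ip (q (η i)) (q z)) =
      q (∑ i, X.sm (ξ i) (X.ip (η i) z)) := by
    rw [hq.map_sum]
    exact Finset.sum_congr rfl fun i _ => by rw [hq.ip, hq.sm]
  calc ‖g (q z) - ∑ i, Q.sm (q (ξ i)) (Q.ip (q (η i)) (q z))‖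
      = ‖q (f z - ∑ i, X.sm (ξ i) (X.ip (η i) z))‖ := by rw [hsum, hfg, hq.map_sub]
    _ ≤ ‖f z - ∑ i, X.sm (ξ i) (X.ip (η i) z)‖ := hq.norm_apply_le hπ _
    _ ≤ ε / C * ‖z‖ := hfξη z
    _ ≤ ε / C * (C * ‖q z‖) := by gcongr
    _ = ε * ‖q z‖ := by field_simp

lemma map_apply_congr (hq : IsQuotMod X Q π J q) (hπ : IsQuotAlg π J) (hJ : IsCIdeal J)
    {A A' : Type} [NonUnitalCStarAlgebra A] [NonUnitalCStarAlgebra A'] {πA : A → A'}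
    {I : Set A} (hπA : IsQuotAlg πA I) {φ : A → X.X → X.X}
    (hφ_add : ∀ a x y, φ a (x + y) = φ a x + φ a y)
    (hφ_add' : ∀ a b x, φ (a + b) x = φ a x + φ b x)
    (hφ_adj : ∀ a x y, X.ip (φ a x) y = X.ip x (φ (star a) y))
    (hIJ : ∀ a ∈ I, ∀ ξ, φ a ξ ∈ X.setR J)
    {a₁ a₂ : A} {ξ₁ ξ₂ : X.X} (ha : πA a₁ = πA a₂) (hξ : q ξ₁ = q ξ₂) :
    q (φ a₁ ξ₁) = q (φ a₂ ξ₂) := by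
  have hξJ : ξ₁ - ξ₂ ∈ X.setR J := (hq.ker _).mp (by rw [hq.map_sub, hξ, sub_self])
  have hadj : ∀ x y, X.ip (φ (star a₁) x) y = X.ip x (φ a₁ y) := fun x y => by
    simpa using hφ_adj (star a₁) x y
  have h₁ := hφ_add a₁ (ξ₁ - ξ₂) ξ₂
  have h₂ := hφ_add' (a₁ - a₂) a₂ ξ₂
  rw [sub_add_cancel] at h₁ h₂
  rw [h₁, h₂, hq.map_add, hq.map_add, hq.apply_eq_zero_of_mem_setR hπ hJ hadj hξJ,
    (hq.ker _).mpr (hIJ _ (hπA.sub_mem_of_apply_eq ha) ξ₂), zero_add, zero_add]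

end IsQuotMod

/- `A/I` is encoded by the surjection `πA`, `B/J` by `πB`, and `X_J` by the `B/J`-module `Q` with
the quotient map `q : X → X_J`. -/
theorem stmt8_general {A A' B B' : Type} [NonUnitalCStarAlgebra A] [NonUnitalCStarAlgebra A']
    [NonUnitalCStarAlgebra B] [NonUnitalCStarAlgebra B']
    (X : HilbMod B) (φ : A → X.X → X.X)
    (hφ_add : ∀ a x y, φ a (x + y) = φ a x + φ a y)
    (hφ_add' : ∀ a b x, φ (a + b) x = φ a x + φ b x)
    (hφ_smul : ∀ a (t : ℂ) x, φ a (t • x) = t • φ a x)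
    (hφ_mul : ∀ a b x, φ (a * b) x = φ a (φ b x))
    (hφ_adj : ∀ a x y, X.ip (φ a x) y = X.ip x (φ (star a) y))
    (I : Set A) (J : Set B) (hJ : IsCIdeal J)
    (hIJ : ∀ a ∈ I, ∀ ξ, φ a ξ ∈ X.setR J)
    (πA : A → A') (hπA : IsQuotAlg πA I) (πB : B → B') (hπB : IsQuotAlg πB J)
    (Q : HilbMod B') (q : X.X → Q.X)
    (hq_surj : Function.Surjective q)
    (hq_add : ∀ ξ η, q (ξ + η) = q ξ + q η)
    (hq_smul : ∀ (t : ℂ) ξ, q (t • ξ) = t • q ξ)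
    (hq_ker : ∀ ξ, q ξ = 0 ↔ ξ ∈ X.setR J)
    (hq_ip : ∀ ξ η, Q.ip (q ξ) (q η) = πB (X.ip ξ η))
    (hq_sm : ∀ ξ b, Q.sm (q ξ) (πB b) = q (X.sm ξ b)) :
    ∃ Φ : A' → Q.X → Q.X,
      (∀ a ξ, Φ (πA a) (q ξ) = q (φ a ξ)) ∧
      (∀ a' x y, Φ a' (x + y) = Φ a' x + Φ a' y) ∧
      (∀ a' b' x, Φ (a' + b') x = Φ a' x + Φ b' x) ∧
      (∀ a' (t : ℂ) x, Φ a' (t • x) = t • Φ a' x) ∧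
      (∀ a' b' x, Φ (a' * b') x = Φ a' (Φ b' x)) ∧
      (∀ a' x y, Q.ip (Φ a' x) y = Q.ip x (Φ (star a') y)) ∧
      ((∀ a, X.IsCompactOp (φ a)) → ∀ a', Q.IsCompactOp (Φ a')) := by
  have hq : IsQuotMod X Q πB J q := ⟨hq_surj, hq_add, hq_smul, hq_ker, hq_ip, hq_sm⟩
  obtain ⟨Φ, hΦ⟩ := hπA.surj.exists_lift₂ hq_surj (fun a ξ => q (φ a ξ))
    fun _ _ _ _ ha hξ => hq.map_apply_congr hπB hJ hπA hφ_add hφ_add' hφ_adj hIJ ha hξ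
  refine ⟨Φ, hΦ, ?_, ?_, ?_, ?_, ?_, ?_⟩
  · refine hπA.surj.forall.2 fun a => hq_surj.forall₂.2 fun ξ η => ?_
    rw [← hq_add, hΦ, hΦ, hΦ, hφ_add, hq_add]
  · refine hπA.surj.forall₂.2 fun a b => hq_surj.forall.2 fun ξ => ?_
    rw [← hπA.map_add, hΦ, hΦ, hΦ, hφ_add', hq_add]
  · refine hπA.surj.forall.2 fun a t => hq_surj.forall.2 fun ξ => ?_
    rw [← hq_smul, hΦ, hΦ, hφ_smul, hq_smul]
  · refine hπA.surj.forall₂.2 fun a b => hq_surj.forall.2 fun ξ => ?_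
    rw [← hπA.map_mul, hΦ, hΦ, hΦ, hφ_mul]
  · refine hπA.surj.forall.2 fun a => hq_surj.forall₂.2 fun ξ η => ?_
    rw [hΦ, ← hπA.map_star, hΦ, hq_ip, hq_ip, hφ_adj]
  · exact fun hcomp => hπA.surj.forall.2 fun a => hq.isCompactOp_of_comp_eq hπB (hΦ a) (hcomp a)

/-- if `φ : A → L(X)` is a *-homomorphism with `φ(I)X ⊆ XJ`, then it descends to
a *-homomorphism `φ_{I,J} : A/I → L(X_J)` with `φ_{I,J}([a]_I)([ξ]_J) = [φ(a)ξ]_J`; and if `φ`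
takes values in `K(X)`, then `φ_{I,J}` takes values in `K(X_J)`.

Here the quotient C*-algebra `A/I` is represented by a surjective *-homomorphism `πA : A → A'`
with kernel `I`, and the quotient Hilbert `B/J`-module `X_J = X/XJ` by a Hilbert module `Q`
over `B'` (with `πB : B → B'` realizing `B/J`) together with the quotient map `q : X → Q`. -/
theorem stmt8 {A A' B B' : Type} [NonUnitalCStarAlgebra A] [NonUnitalCStarAlgebra A']
    [NonUnitalCStarAlgebra B] [NonUnitalCStarAlgebra B']
    (X : HilbMod B) (φ : A → X.X → X.X)
    (hφ_add : ∀ a x y, φ a (x + y) = φ a x + φ a y)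
    (hφ_add' : ∀ a b x, φ (a + b) x = φ a x + φ b x)
    (hφ_smul : ∀ a (t : ℂ) x, φ a (t • x) = t • φ a x)
    (hφ_smul' : ∀ (t : ℂ) a x, φ (t • a) x = t • φ a x)
    (hφ_mul : ∀ a b x, φ (a * b) x = φ a (φ b x))
    (hφ_adj : ∀ a x y, X.ip (φ a x) y = X.ip x (φ (star a) y))
    (I : Set A) (hI : IsCIdeal I) (J : Set B) (hJ : IsCIdeal J)
    (hIJ : ∀ a ∈ I, ∀ ξ, φ a ξ ∈ X.setR J)
    (πA : A → A') (hπA : IsQuotAlg πA I) (πB : B → B') (hπB : IsQuotAlg πB J)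
    (Q : HilbMod B') (q : X.X → Q.X)
    (hq_surj : Function.Surjective q)
    (hq_add : ∀ ξ η, q (ξ + η) = q ξ + q η)
    (hq_smul : ∀ (t : ℂ) ξ, q (t • ξ) = t • q ξ)
    (hq_ker : ∀ ξ, q ξ = 0 ↔ ξ ∈ X.setR J)
    (hq_ip : ∀ ξ η, Q.ip (q ξ) (q η) = πB (X.ip ξ η))
    (hq_sm : ∀ ξ b, Q.sm (q ξ) (πB b) = q (X.sm ξ b)) :
    ∃ Φ : A' → Q.X → Q.X,
      (∀ a ξ, Φ (πA a) (q ξ) = q (φ a ξ)) ∧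
      (∀ a' x y, Φ a' (x + y) = Φ a' x + Φ a' y) ∧
      (∀ a' b' x, Φ (a' + b') x = Φ a' x + Φ b' x) ∧
      (∀ a' (t : ℂ) x, Φ a' (t • x) = t • Φ a' x) ∧
      (∀ a' b' x, Φ (a' * b') x = Φ a' (Φ b' x)) ∧
      (∀ a' x y, Q.ip (Φ a' x) y = Q.ip x (Φ (star a') y)) ∧
      ((∀ a, X.IsCompactOp (φ a)) → ∀ a', Q.IsCompactOp (Φ a')) :=
  stmt8_general X φ hφ_add hφ_add' hφ_smul hφ_mul hφ_adj I J hJ hIJ πA hπA πB hπB Q q hq_surj hq_add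
    hq_smul hq_ker hq_ip hq_sm
end
end
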